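/- The series ∑_{j=1}^∞ j · (1 − lcm(1,…,j−1)/lcm(1,…,j)) · (1/lcm(1,…,j−1)) converges. -/

import Mathlib

/-!
The `j`-th term is at most `(j + 1) / lcm(1,…,j)`. Since `gcd(n, n + 2) ∣ 2` and `n + 1` is
coprime to `n` and `n + 2`, the product `n (n + 1) (n + 2)` divides `2 lcm(1,…,n + 2)`, so
`lcm(1,…,j)` grows at least cubically and the terms are `O(1 / j²)`.
-/

open Finset

theorem Nat.mul_add_one_mul_add_two_dvd_two_mul {n m : ℕ} (h₀ : n ∣ m) (h₁ : n + 1 ∣ m)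
    (h₂ : n + 2 ∣ m) : n * (n + 1) * (n + 2) ∣ 2 * m := by
  have hgcd : Nat.gcd n (n + 2) ∣ 2 := by
    simpa using Nat.dvd_sub (Nat.gcd_dvd_right n (n + 2)) (Nat.gcd_dvd_left n (n + 2))
  have hout : n * (n + 2) ∣ 2 * m := by
    rw [← Nat.gcd_mul_lcm n (n + 2)]
    exact mul_dvd_mul hgcd (Nat.lcm_dvd h₀ h₂)
  have hcop : Nat.Coprime (n + 1) (n * (n + 2)) :=
    Nat.Coprime.mul_right (Nat.coprime_self_add_right.mpr (Nat.coprime_one_right n)).symm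
      (Nat.coprime_self_add_right.mpr (Nat.coprime_one_right _))
  calc n * (n + 1) * (n + 2) = (n + 1) * (n * (n + 2)) := by ring
    _ ∣ 2 * m := hcop.mul_dvd_of_dvd_of_dvd (h₁.mul_left 2) hout

theorem lcm_Icc_pos (j : ℕ) : 0 < (Icc 1 j).lcm id :=
  Nat.pos_of_ne_zero <| lcm_ne_zero_iff.mpr fun k hk => by rw [mem_Icc] at hk; exact Nat.one_le_iff_ne_zero.mp hk.1

theorem dvd_lcm_Icc {k j : ℕ} (h₁ : 1 ≤ k) (h₂ : k ≤ j) : k ∣ (Icc 1 j).lcm id :=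
  dvd_lcm (f := id) (mem_Icc.mpr ⟨h₁, h₂⟩)

theorem lcm_Icc_le_lcm_Icc_succ (j : ℕ) : (Icc 1 j).lcm id ≤ (Icc 1 (j + 1)).lcm id :=
  Nat.le_of_dvd (lcm_Icc_pos _) (lcm_mono (Icc_subset_Icc_right j.le_succ))

theorem cubic_le_two_mul_lcm_Icc (n : ℕ) :
    ((n : ℝ) + 2) * (n + 3) * (n + 4) ≤ 2 * ((Icc 1 (n + 4)).lcm id : ℕ) := by
  have h := Nat.le_of_dvd (by positivity [lcm_Icc_pos (n + 4)])
    (Nat.mul_add_one_mul_add_two_dvd_two_mul (n := n + 2)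
      (dvd_lcm_Icc (by omega) (by omega)) (dvd_lcm_Icc (by omega) (by omega))
      (dvd_lcm_Icc (by omega) (by omega)))
  exact_mod_cast h

theorem summable_add_one_div_lcm_Icc :
    Summable fun j : ℕ => ((j : ℝ) + 1) / ((Icc 1 j).lcm id : ℕ) := by
  rw [← summable_nat_add_iff 4]
  have hmaj : Summable fun n : ℕ => 4 / ((n : ℝ) + 1) ^ 2 := by
    simpa [div_eq_mul_inv] using ((summable_nat_add_iff 1).mpr
      ((Real.summable_one_div_nat_pow.mpr one_lt_two).mul_left 4))
  refine hmaj.of_nonneg_of_le (fun n => by positivity) fun n => ?_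
  have hL := cubic_le_two_mul_lcm_Icc n
  have hpos : (0 : ℝ) < ((Icc 1 (n + 4)).lcm id : ℕ) := by exact_mod_cast lcm_Icc_pos _
  rw [div_le_div_iff₀ hpos (by positivity)]
  push_cast
  nlinarith [sq_nonneg ((n : ℝ) + 1)]

theorem mul_one_sub_div_mul_one_div_nonneg {a b c : ℝ} (ha : 0 < a) (hab : a ≤ b) (hc : 0 ≤ c) :
    0 ≤ c * (1 - a / b) * (1 / a) := by
  have : a / b ≤ 1 := div_le_one_of_le₀ hab (ha.le.trans hab)
  have : 0 ≤ 1 - a / b := by linarith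
  positivity

theorem mul_one_sub_div_mul_one_div_le {a b c : ℝ} (ha : 0 < a) (hab : a ≤ b) (hc : 0 ≤ c) :
    c * (1 - a / b) * (1 / a) ≤ c / a := by
  have : 0 ≤ a / b := div_nonneg ha.le (ha.le.trans hab)
  rw [mul_one_div]
  gcongr
  exact mul_le_of_le_one_right hc (by linarith)

/-- With `L j = lcm(1,…,j)` (so `L 0 = 1`), the series
`∑_{j=1}^∞ j · (1 − L (j−1) / L j) · (1 / L (j−1))` converges.  (This series
equals `Ave(ℤ)`.) -/
theorem summable_residual_average_int (L : ℕ → ℕ)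
    (hL : ∀ j, L j = (Finset.Icc 1 j).lcm id) :
    Summable (fun j : ℕ =>
      ((j : ℝ) + 1) * (1 - (L j : ℝ) / (L (j + 1) : ℝ)) * (1 / (L j : ℝ))) := by
  have hpos (j : ℕ) : (0 : ℝ) < L j := by exact_mod_cast hL j ▸ lcm_Icc_pos j
  have hmono (j : ℕ) : (L j : ℝ) ≤ L (j + 1) := by
    exact_mod_cast hL j ▸ hL (j + 1) ▸ lcm_Icc_le_lcm_Icc_succ j
  refine (summable_add_one_div_lcm_Icc.congr fun j => by rw [hL]).of_nonneg_of_le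
    (fun j => mul_one_sub_div_mul_one_div_nonneg (hpos j) (hmono j) (by positivity))
    (fun j => mul_one_sub_div_mul_one_div_le (hpos j) (hmono j) (by positivity))
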